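/- The graph G₀ (with dense ⟨wₙ⟩) admits no countable colouring c : 2^ω → ω in which every colour class c⁻¹(n) has the Baire property. In particular G₀ admits no countable Borel colouring. -/

import Mathlib

/-- The witness condition at index `n` for the graph `G₀` determined by the
sequence `w` (where `w n` codes the tuple `wₙ ∈ 2ⁿ` on coordinates `< n`). -/
def G0Witness (w : ℕ → ℕ → Bool) (n : ℕ) (x y : ℕ → Bool) : Prop :=
  (∀ k, k < n → x k = w n k ∧ y k = w n k) ∧ x n = !(y n) ∧ ∀ k, n < k → x k = y k

/-- The graph `G₀` on Cantor space `2^ω`. -/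
def G0 (w : ℕ → ℕ → Bool) (x y : ℕ → Bool) : Prop :=
  ∃ n, G0Witness w n x y

open Topology Filter Set

/-- The map flipping the `n`-th coordinate. -/
def flipAt (n : ℕ) (x : ℕ → Bool) : ℕ → Bool := fun k => if k = n then !x k else x k

lemma flipAt_invol (n : ℕ) : Function.Involutive (flipAt n) := by
  intro x; funext k; simp only [flipAt]; split <;> simp

lemma continuous_flipAt (n : ℕ) : Continuous (flipAt n) := by
  refine continuous_pi fun k => ?_
  by_cases h : k = n
  · simp only [flipAt, if_pos h]
    exact (continuous_of_discreteTopology (f := Bool.not)).comp (continuous_apply k)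
  · simpa only [flipAt, if_neg h] using continuous_apply k

/-- Flipping the `n`-th coordinate as a homeomorphism of Cantor space. -/
def flipHomeo (n : ℕ) : (ℕ → Bool) ≃ₜ (ℕ → Bool) where
  toFun := flipAt n
  invFun := flipAt n
  left_inv := flipAt_invol n
  right_inv := flipAt_invol n
  continuous_toFun := continuous_flipAt n
  continuous_invFun := continuous_flipAt n

/-- With a dense `⟨wₙ⟩`, the graph `G₀` admits no countable colouring whose
colour classes all have the Baire property. -/
theorem G0_no_countable_BP_colouring (w : ℕ → ℕ → Bool)
    (hdense : ∀ (m : ℕ) (s : ℕ → Bool), ∃ n, m ≤ n ∧ ∀ k, k < m → s k = w n k) :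
    ¬ ∃ c : (ℕ → Bool) → ℕ,
        (∀ n, BaireMeasurableSet (c ⁻¹' {n})) ∧
        (∀ x y, G0 w x y → c x ≠ c y) := by
  rintro ⟨c, hBP, hcol⟩
  -- some colour class is non-meager
  have hcover : (⋃ n, c ⁻¹' {n}) = univ := by ext x; simp
  have hex : ∃ n, ¬ IsMeagre (c ⁻¹' {n}) := by
    by_contra h
    push_neg at h
    have hm : IsMeagre (⋃ n, c ⁻¹' {n}) := isMeagre_iUnion h
    rw [hcover] at hm
    have : Dense ((univ : Set (ℕ → Bool))ᶜ) := dense_of_mem_residual hm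
    rw [compl_univ] at this
    exact Set.not_nonempty_empty this.nonempty
  obtain ⟨n₀, hn₀⟩ := hex
  set s : Set (ℕ → Bool) := c ⁻¹' {n₀} with hs
  -- `s` differs from an open set `u` by a meager set
  obtain ⟨u, huo, hsu⟩ := (hBP n₀).residualEq_isOpen
  -- `u` is nonempty
  have hune : u.Nonempty := by
    rcases eq_empty_or_nonempty u with h | h
    · exfalso
      apply hn₀
      subst h
      have := Filter.eventuallyEq_set.mp hsu
      exact Filter.mem_of_superset this (fun x hx hxs => (hx.mp hxs).elim)
    · exact h
  obtain ⟨x₀, hx₀⟩ := hune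
  -- find a basic cylinder inside `u`
  obtain ⟨I, v, hIv, hpi⟩ := isOpen_pi_iff.mp huo x₀ hx₀
  set m : ℕ := (I.sup id) + 1 with hm
  have hIm : ∀ i ∈ I, i < m := fun i hi =>
    Nat.lt_succ_of_le (Finset.le_sup (f := id) hi)
  -- density: find `n ≥ m` with `wₙ` extending `x₀ ↾ m`
  obtain ⟨n, hmn, hwn⟩ := hdense m x₀
  -- the cylinder determined by `wₙ ↾ n`
  set C : Set (ℕ → Bool) := {y | ∀ k, k < n → y k = w n k} with hC
  have hCopen : IsOpen C := by
    have : C = Set.pi (↑(Finset.range n)) (fun k => {w n k}) := by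
      ext y
      simp [hC, Set.mem_pi]
    rw [this]
    exact isOpen_set_pi (Finset.range n).finite_toSet (fun a _ => isOpen_discrete _)
  have hCu : C ⊆ u := by
    intro y hy
    apply hpi
    intro i hi
    have him : i < m := hIm i hi
    have : y i = x₀ i := by
      rw [hy i (lt_of_lt_of_le him hmn), ← hwn i him]
    rw [this]
    exact (hIv i hi).2
  have hwC : w n ∈ C := fun k _ => rfl
  -- the flip homeomorphism at `n` maps `C` into `C`
  have hflipC : ∀ y ∈ C, flipAt n y ∈ C := by
    intro y hy k hk
    have : k ≠ n := Nat.ne_of_lt hk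
    simp only [flipAt, if_neg this]
    exact hy k hk
  -- transfer the residual equality along the flip
  have htend : Tendsto (flipAt n) (residual _) (residual _) :=
    tendsto_residual_of_isOpenMap (continuous_flipAt n) (flipHomeo n).isOpenMap
  have hsu' : (s ∘ flipAt n) =ᶠ[residual _] (u ∘ flipAt n) := hsu.comp_tendsto htend
  -- the residual set where both equivalences hold is dense
  have hres : {x | (x ∈ s ↔ x ∈ u) ∧ (flipAt n x ∈ s ↔ flipAt n x ∈ u)} ∈ residual _ := by
    filter_upwards [Filter.eventuallyEq_set.mp hsu, hsu'] with x h1 h2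
    exact ⟨h1, iff_of_eq h2⟩
  have hdenseR := dense_of_mem_residual hres
  obtain ⟨x, hxR, hxC⟩ := hdenseR.exists_mem_open hCopen ⟨w n, hwC⟩
  -- `x` and `flipAt n x` are both in the colour class `s`
  have hxs : x ∈ s := hxR.1.mpr (hCu hxC)
  have hfxs : flipAt n x ∈ s := hxR.2.mpr (hCu (hflipC x hxC))
  -- but they are `G₀`-adjacent
  have hadj : G0 w x (flipAt n x) := by
    refine ⟨n, fun k hk => ⟨hxC k hk, hflipC x hxC k hk⟩, ?_, ?_⟩
    · simp [flipAt]
    · intro k hk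
      have : k ≠ n := (Nat.ne_of_lt hk).symm
      simp [flipAt, this]
  exact hcol x (flipAt n x) hadj (by rw [hxs, hfxs])
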